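/- arXiv:1902.11263 — 4 statements merged into one kernel-verified Lean document; each statement's English description precedes it below -/
import Mathlib

section
/- The factor distance is a metric on the set of words over B: for all words x, y, z over B, (i) dist_f(x,y) = dist_f(y,x), (ii) dist_f(x,y) = 0 if and only if x = y, and (iii) dist_f(x,z) ≤ dist_f(x,y) + dist_f(y,z). -/
/-- `wpow x n` is the word `x` repeated `n` times (`x^n`). -/
def wpow {B : Type*} (x : List B) : ℕ → List B
  | 0 => []
  | n + 1 => x ++ wpow x n

/-- Length of a longest common factor (infix) of `u` and `v`. -/
noncomputable def lcfLen {B : Type*} (u v : List B) : ℕ :=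
  sSup {n | ∃ w : List B, w.length = n ∧ w <:+: u ∧ w <:+: v}

/-- The factor distance `dist_f(u,v) = |u| + |v| - 2·|lcf(u,v)|`. -/
noncomputable def distf {B : Type*} (u v : List B) : ℕ :=
  u.length + v.length - 2 * lcfLen u v

/-- A context is a pair of words; `capp c w = c.1 ++ w ++ c.2` is `c[w]`. -/
def capp {B : Type*} (c : List B × List B) (w : List B) : List B :=
  c.1 ++ w ++ c.2

/-- The length `|c|` of a context. -/
def clen {B : Type*} (c : List B × List B) : ℕ :=
  c.1.length + c.2.length

/-- Product of contexts: `(c·d)[w] = c[d[w]]`. -/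
def cmul {B : Type*} (c d : List B × List B) : List B × List B :=
  (c.1 ++ d.1, d.2 ++ c.2)

/-- Power of a context: `c^n[w] = l^n ++ w ++ r^n`. -/
def cpow {B : Type*} (c : List B × List B) (n : ℕ) : List B × List B :=
  (wpow c.1 n, wpow c.2 n)

/-- A nonempty word `x` is primitive if `x = y^p` with `p ≥ 1` implies `p = 1`. -/
def Primitive {B : Type*} (x : List B) : Prop :=
  x ≠ [] ∧ ∀ (y : List B) (p : ℕ), 1 ≤ p → x = wpow y p → p = 1

/-- Words `x` and `y` are conjugate. -/
def Conj {B : Type*} (x y : List B) : Prop :=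
  ∃ t1 t2 : List B, x = t1 ++ t2 ∧ y = t2 ++ t1

/-- The triple of contexts `(c, d, e)` is `x`-commuting: there is a context `f`
such that for every `i ≥ 1` there is `k` with `(e^i·d·c)[ε] = f[x^k]`. -/
def XCommuting {B : Type*} (c d e : List B × List B) (x : List B) : Prop :=
  ∃ f : List B × List B, ∀ i : ℕ, 1 ≤ i → ∃ k : ℕ,
    capp (cmul (cpow e i) (cmul d c)) [] = capp f (wpow x k)

/-!
Two factors `w₁, w₂` of `y` overlap, inside `y`, in a common factor of length at least
`|w₁| + |w₂| - |y|`. Applied to longest common factors of `x, y` and of `y, z`, this gives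
`lcf(x,y) + lcf(y,z) ≤ |y| + lcf(x,z)`, which is the triangle inequality for `dist_f`.
-/

namespace List

variable {α : Type*}

theorem IsInfix.exists_take_drop_eq {w l : List α} (h : w <:+: l) :
    ∃ i, i + w.length ≤ l.length ∧ (l.drop i).take w.length = w := by
  obtain ⟨s, t, rfl⟩ := h
  refine ⟨s.length, by simp, ?_⟩
  rw [append_assoc, drop_left, take_left]

theorem take_drop_infix_take_drop (l : List α) {i j m n : ℕ} (hij : i ≤ j)
    (hm : m ≤ n - (j - i)) : (l.drop j).take m <:+: (l.drop i).take n := by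
  have hwindow : (l.drop j).take m = (((l.drop i).take n).drop (j - i)).take m := by
    rw [drop_take, drop_drop, take_take, Nat.add_sub_cancel' hij, Nat.min_eq_left hm]
  rw [hwindow]
  exact (take_prefix m _).isInfix.trans (drop_suffix _ _).isInfix

theorem exists_common_infix_take_drop (l : List α) {i₁ i₂ n₁ n₂ : ℕ} (hi : i₁ ≤ i₂)
    (h₁ : i₁ + n₁ ≤ l.length) (h₂ : i₂ + n₂ ≤ l.length) :
    ∃ w, w <:+: (l.drop i₁).take n₁ ∧ w <:+: (l.drop i₂).take n₂ ∧
      n₁ + n₂ ≤ l.length + w.length := by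
  -- the overlap of the windows `[i₁, i₁ + n₁)` and `[i₂, i₂ + n₂)` of `l`
  set m := min (i₁ + n₁) (i₂ + n₂) - i₂
  refine ⟨(l.drop i₂).take m, take_drop_infix_take_drop l hi (by omega),
    take_drop_infix_take_drop l le_rfl (by omega), ?_⟩
  simp only [length_take, length_drop]
  omega

theorem IsInfix.exists_common_infix {w₁ w₂ l : List α} (h₁ : w₁ <:+: l) (h₂ : w₂ <:+: l) :
    ∃ w, w <:+: w₁ ∧ w <:+: w₂ ∧ w₁.length + w₂.length ≤ l.length + w.length := by
  obtain ⟨i₁, hi₁, e₁⟩ := h₁.exists_take_drop_eq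
  obtain ⟨i₂, hi₂, e₂⟩ := h₂.exists_take_drop_eq
  rcases le_total i₁ i₂ with hi | hi
  · obtain ⟨w, hw₁, hw₂, hlen⟩ := exists_common_infix_take_drop l hi hi₁ hi₂
    exact ⟨w, e₁ ▸ hw₁, e₂ ▸ hw₂, hlen⟩
  · obtain ⟨w, hw₂, hw₁, hlen⟩ := exists_common_infix_take_drop l hi hi₂ hi₁
    exact ⟨w, e₁ ▸ hw₁, e₂ ▸ hw₂, by omega⟩

end List

section LongestCommonFactor

variable {B : Type*}

theorem bddAbove_lcfLen_set (u v : List B) :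
    BddAbove {n | ∃ w : List B, w.length = n ∧ w <:+: u ∧ w <:+: v} :=
  ⟨u.length, by rintro n ⟨w, rfl, hu, -⟩; exact hu.length_le⟩

theorem length_le_lcfLen {u v w : List B} (hu : w <:+: u) (hv : w <:+: v) :
    w.length ≤ lcfLen u v :=
  le_csSup (bddAbove_lcfLen_set u v) ⟨w, rfl, hu, hv⟩

theorem exists_infix_length_eq_lcfLen (u v : List B) :
    ∃ w : List B, w.length = lcfLen u v ∧ w <:+: u ∧ w <:+: v :=
  Nat.sSup_mem (s := {n | ∃ w : List B, w.length = n ∧ w <:+: u ∧ w <:+: v})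
    ⟨0, [], rfl, List.nil_infix, List.nil_infix⟩ (bddAbove_lcfLen_set u v)

theorem lcfLen_comm (u v : List B) : lcfLen u v = lcfLen v u := by
  simp only [lcfLen, and_comm (a := _ <:+: u)]

theorem lcfLen_le_length_left (u v : List B) : lcfLen u v ≤ u.length := by
  obtain ⟨w, hw, hu, -⟩ := exists_infix_length_eq_lcfLen u v
  exact hw ▸ hu.length_le

theorem lcfLen_le_length_right (u v : List B) : lcfLen u v ≤ v.length :=
  lcfLen_comm u v ▸ lcfLen_le_length_left v u

theorem lcfLen_self (u : List B) : lcfLen u u = u.length :=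
  (lcfLen_le_length_left u u).antisymm (length_le_lcfLen (List.infix_refl u) (List.infix_refl u))

theorem lcfLen_add_lcfLen_le (x y z : List B) :
    lcfLen x y + lcfLen y z ≤ y.length + lcfLen x z := by
  obtain ⟨w₁, hw₁, hx₁, hy₁⟩ := exists_infix_length_eq_lcfLen x y
  obtain ⟨w₂, hw₂, hy₂, hz₂⟩ := exists_infix_length_eq_lcfLen y z
  obtain ⟨w, hww₁, hww₂, hlen⟩ := hy₁.exists_common_infix hy₂
  have hw : w.length ≤ lcfLen x z := length_le_lcfLen (hww₁.trans hx₁) (hww₂.trans hz₂)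
  omega

end LongestCommonFactor

section FactorDistance

variable {B : Type*}

theorem distf_comm (u v : List B) : distf u v = distf v u := by
  rw [distf, distf, lcfLen_comm, Nat.add_comm u.length]

theorem distf_self (u : List B) : distf u u = 0 := by
  rw [distf, lcfLen_self]
  omega

theorem eq_of_distf_eq_zero {u v : List B} (h : distf u v = 0) : u = v := by
  obtain ⟨w, hw, hu, hv⟩ := exists_infix_length_eq_lcfLen u v
  have hlu := lcfLen_le_length_left u v
  have hlv := lcfLen_le_length_right u v
  rw [distf] at h
  rw [← hu.eq_of_length (by omega), ← hv.eq_of_length (by omega)]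

theorem distf_triangle (x y z : List B) : distf x z ≤ distf x y + distf y z := by
  have := lcfLen_add_lcfLen_le x y z
  have := lcfLen_le_length_left x y
  have := lcfLen_le_length_right x y
  have := lcfLen_le_length_left y z
  have := lcfLen_le_length_right y z
  simp only [distf]
  omega

end FactorDistance

/-- the factor distance is a metric. -/
theorem distf_is_metric {B : Type*} (x y z : List B) :
    distf x y = distf y x ∧ (distf x y = 0 ↔ x = y) ∧
    distf x z ≤ distf x y + distf y z :=
  ⟨distf_comm x y, ⟨eq_of_distf_eq_zero, fun h => h ▸ distf_self x⟩, distf_triangle x y z⟩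
end

section
/- Let x be a nonempty word and y a word with |y| ≥ |x|. If y is a factor of x^n for some n ∈ ℕ, then there exist a word z conjugate to the primitive root ρ(x), an integer p ≥ 1, and a prefix z' of z such that y = z^p·z' (i.e., the primitive period of y is conjugate to the primitive root of x). -/
/-! A factor `y` of `r^m` starts inside some copy of `r`, say after its prefix `a'` where
`r = a' ++ s`; from there on it reads the rotated word `s ++ a'` periodically, so `y` is a prefix
of a power of that conjugate `z` of `r`. As `|y| ≥ |x| ≥ |r| = |z|`, `y` contains at least one full
period `z`. -/

section Words

variable {B : Type*}

theorem wpow_add (x : List B) (m n : ℕ) : wpow x (m + n) = wpow x m ++ wpow x n := by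
  induction m with
  | zero => simp [wpow]
  | succ k ih => simp [wpow, Nat.succ_add, ih]

theorem length_wpow (x : List B) (n : ℕ) : (wpow x n).length = n * x.length := by
  induction n with
  | zero => simp [wpow]
  | succ k ih => simp [wpow, ih, Nat.succ_mul, Nat.add_comm]

theorem wpow_wpow (r : List B) (q n : ℕ) : wpow (wpow r q) n = wpow r (n * q) := by
  induction n with
  | zero => simp [wpow]
  | succ k ih => rw [wpow, ih, ← wpow_add, Nat.succ_mul, Nat.add_comm]

theorem wpow_prefix_wpow_add (x : List B) (m n : ℕ) : wpow x m <+: wpow x (m + n) :=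
  wpow_add x m n ▸ List.prefix_append _ _

theorem append_wpow_append_comm (a s : List B) (k : ℕ) :
    a ++ wpow (s ++ a) k = wpow (a ++ s) k ++ a := by
  induction k with
  | zero => simp [wpow]
  | succ n ih => simp only [wpow, List.append_assoc, ih]

theorem Conj.length_eq {z r : List B} (h : Conj z r) : z.length = r.length := by
  obtain ⟨t1, t2, rfl, rfl⟩ := h
  simp [Nat.add_comm]

theorem exists_eq_wpow_append_of_prefix_wpow {z y : List B} (hz : z ≠ []) {m : ℕ}
    (hy : y <+: wpow z m) :
    ∃ p z', z' <+: z ∧ z'.length < z.length ∧ y = wpow z p ++ z' := by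
  induction m generalizing y with
  | zero =>
    obtain rfl : y = [] := by simpa [wpow] using hy
    exact ⟨0, [], List.nil_prefix, List.length_pos_iff.mpr hz, rfl⟩
  | succ k ih =>
    rw [wpow] at hy
    rcases lt_or_ge y.length z.length with hshort | hlong
    · exact ⟨0, y, List.prefix_of_prefix_length_le hy (List.prefix_append _ _) hshort.le,
        hshort, rfl⟩
    · obtain ⟨y', rfl⟩ := List.prefix_of_prefix_length_le (List.prefix_append _ _) hy hlong
      obtain ⟨p, z', hz'z, hz'len, rfl⟩ := ih ((List.prefix_append_right_inj z).mp hy)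
      exact ⟨p + 1, z', hz'z, hz'len, by simp [wpow]⟩

theorem exists_conj_prefix_wpow_of_infix_wpow {r y : List B} (hr : r ≠ []) {m : ℕ}
    (hy : y <:+: wpow r m) : ∃ z, Conj z r ∧ y <+: wpow z m := by
  obtain ⟨a, b, hab⟩ := hy
  have ha : a <+: wpow r m := ⟨y ++ b, by rw [← hab, List.append_assoc]⟩
  obtain ⟨j, a', ⟨s, hs⟩, -, rfl⟩ := exists_eq_wpow_append_of_prefix_wpow hr ha
  refine ⟨s ++ a', ⟨s, a', rfl, hs.symm⟩, ?_⟩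
  have hstart : wpow r j ++ (a' ++ y) <+: wpow r j ++ wpow r m := by
    rw [← wpow_add, ← List.append_assoc, Nat.add_comm]
    exact List.IsPrefix.trans ⟨b, hab⟩ (wpow_prefix_wpow_add r m j)
  have hshift : a' ++ y <+: a' ++ wpow (s ++ a') m := by
    rw [append_wpow_append_comm, hs]
    exact ((List.prefix_append_right_inj _).mp hstart).trans (List.prefix_append _ _)
  exact (List.prefix_append_right_inj a').mp hshift

end Words

theorem primitive_period_of_factor_of_power_general {B : Type*} (x y : List B)
    (hlen : x.length ≤ y.length)
    (hfac : ∃ n : ℕ, y <:+: wpow x n)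
    (r : List B) (hr : Primitive r) (hroot : ∃ q : ℕ, 1 ≤ q ∧ x = wpow r q) :
    ∃ z : List B, Conj z r ∧ ∃ p : ℕ, 1 ≤ p ∧ ∃ z' : List B,
      z' <+: z ∧ y = wpow z p ++ z' := by
  obtain ⟨n, hy⟩ := hfac
  obtain ⟨q, hq, rfl⟩ := hroot
  rw [wpow_wpow] at hy
  obtain ⟨z, hzr, hyz⟩ := exists_conj_prefix_wpow_of_infix_wpow hr.1 hy
  have hz : z ≠ [] := List.ne_nil_of_length_pos (hzr.length_eq ▸ List.length_pos_iff.mpr hr.1)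
  obtain ⟨p, z', hz'z, hz'len, rfl⟩ := exists_eq_wpow_append_of_prefix_wpow hz hyz
  refine ⟨z, hzr, p, Nat.one_le_iff_ne_zero.mpr ?_, z', hz'z, rfl⟩
  rintro rfl
  have hrx : r.length ≤ (wpow r q).length := by
    rw [length_wpow]; exact Nat.le_mul_of_pos_left _ hq
  simp only [wpow, List.nil_append, hzr.length_eq] at hlen hz'len
  omega

/-- a long factor of `x^n` has primitive period conjugate to the
primitive root of `x`. -/
theorem primitive_period_of_factor_of_power {B : Type*} (x y : List B)
    (hx : x ≠ []) (hlen : x.length ≤ y.length)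
    (hfac : ∃ n : ℕ, y <:+: wpow x n)
    (r : List B) (hr : Primitive r) (hroot : ∃ q : ℕ, 1 ≤ q ∧ x = wpow r q) :
    ∃ z : List B, Conj z r ∧ ∃ p : ℕ, 1 ≤ p ∧ ∃ z' : List B,
      z' <+: z ∧ y = wpow z p ++ z' :=
  primitive_period_of_factor_of_power_general x y hlen hfac r hr hroot
end

section
/- Let u1, w1, u2, w2 be words over B and v1, v2 nonempty words with |v1| = |v2|, such that u1·v1^i·w1 = u2·v2^i·w2 for all i ∈ ℕ. Then there exist a nonempty word x and contexts f1, f2 such that for every i ≥ 1 there exists k ∈ ℕ with v1^i = f1[x^k] and v2^i = f2[x^k]. -/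
/-! Say `|u1| ≤ |u2|`. For `i = |u2| + 1` and `j < |v1|`, position `|u2| + j` of both sides lies
inside the powers, so the two sides read `v2[j]` and `v1[(|u2| - |u1| + j) mod |v1|]` there:
`v2` is the rotation of `v1` by `|u2| - |u1|`, i.e. `v1 = t1 t2` and `v2 = t2 t1`. Then
`v1^(k+1) = (t1 t2)[v1^k]` and `v2^(k+1) = t2 v1^k t1`, so `x = v1` works. -/

theorem wpow_length {B : Type*} (x : List B) (n : ℕ) :
    (wpow x n).length = n * x.length := by
  induction n with
  | zero => simp [wpow]
  | succ n ih => simp [wpow, ih, Nat.succ_mul, Nat.add_comm]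

theorem getElem?_wpow {B : Type*} (v : List B) {k p : ℕ} (hp : p < k * v.length) :
    (wpow v k)[p]? = v[p % v.length]? := by
  induction k generalizing p with
  | zero => simp at hp
  | succ k ih =>
    rw [wpow]
    rcases lt_or_ge p v.length with hpv | hpv
    · rw [List.getElem?_append_left hpv, Nat.mod_eq_of_lt hpv]
    · rw [List.getElem?_append_right hpv, ih (by rw [Nat.succ_mul] at hp; omega),
        ← Nat.mod_eq_sub_mod hpv]

theorem rotate_eq_of_append_wpow_append_eq {B : Type*} {u1 w1 u2 w2 v1 v2 : List B}
    (hlen : v1.length = v2.length) (hu : u1.length ≤ u2.length)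
    (h : ∀ i : ℕ, u1 ++ wpow v1 i ++ w1 = u2 ++ wpow v2 i ++ w2) :
    v1.rotate (u2.length - u1.length) = v2 := by
  refine List.ext_getElem? fun j => ?_
  rcases lt_or_ge j v1.length with hj | hj
  · have hin : u2.length + j < (u2.length + 1) * v1.length := by nlinarith
    have hi := congrArg (·[u2.length + j]?) (h (u2.length + 1))
    simp only [List.append_assoc] at hi
    rw [List.getElem?_append_right (by omega), List.getElem?_append_left
      (by rw [wpow_length]; omega), getElem?_wpow _ (by omega),
      List.getElem?_append_right (by omega), List.getElem?_append_left
      (by rw [wpow_length, ← hlen]; omega), getElem?_wpow _ (by rw [← hlen]; omega),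
      Nat.add_sub_cancel_left, Nat.mod_eq_of_lt (a := j) (hlen ▸ hj)] at hi
    rw [List.getElem?_rotate hj, ← hi]
    congr 2
    omega
  · rw [List.getElem?_eq_none (by simpa using hj), List.getElem?_eq_none (by omega)]

theorem conj_rotate {B : Type*} (v : List B) (n : ℕ) : Conj v (v.rotate n) :=
  ⟨_, _, (List.take_append_drop (n % v.length) v).symm, List.rotate_eq_drop_append_take_mod⟩

theorem Conj.symm {B : Type*} {x y : List B} (h : Conj x y) : Conj y x :=
  let ⟨t1, t2, hx, hy⟩ := h
  ⟨t2, t1, hy, hx⟩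

theorem wpow_succ_append_comm {B : Type*} (t1 t2 : List B) (n : ℕ) :
    wpow (t2 ++ t1) (n + 1) = t2 ++ wpow (t1 ++ t2) n ++ t1 := by
  induction n with
  | zero => simp [wpow]
  | succ n ih => simp_all [wpow]

theorem exists_capp_wpow_of_conj {B : Type*} {x y : List B} (hxy : Conj x y) :
    ∃ f1 f2 : List B × List B, ∀ i : ℕ, 1 ≤ i → ∃ k : ℕ,
      wpow x i = capp f1 (wpow x k) ∧ wpow y i = capp f2 (wpow x k) := by
  obtain ⟨t1, t2, rfl, rfl⟩ := hxy
  refine ⟨(t1 ++ t2, []), (t2, t1), fun i hi => ?_⟩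
  obtain ⟨k, rfl⟩ := Nat.exists_eq_add_of_le' hi
  exact ⟨k, by simp [capp, wpow], wpow_succ_append_comm t1 t2 k⟩

theorem comb_1_1_general {B : Type*} (u1 w1 u2 w2 v1 v2 : List B)
    (hv1 : v1 ≠ []) (hlen : v1.length = v2.length)
    (h : ∀ i : ℕ, u1 ++ wpow v1 i ++ w1 = u2 ++ wpow v2 i ++ w2) :
    ∃ x : List B, x ≠ [] ∧ ∃ f1 f2 : List B × List B,
      ∀ i : ℕ, 1 ≤ i → ∃ k : ℕ,
        wpow v1 i = capp f1 (wpow x k) ∧ wpow v2 i = capp f2 (wpow x k) := by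
  have hconj : Conj v1 v2 := by
    rcases le_total u1.length u2.length with hu | hu
    · exact rotate_eq_of_append_wpow_append_eq hlen hu h ▸ conj_rotate v1 _
    · exact Conj.symm <|
        (rotate_eq_of_append_wpow_append_eq hlen.symm hu fun i => (h i).symm) ▸ conj_rotate v2 _
  exact ⟨v1, hv1, exists_capp_wpow_of_conj hconj⟩

theorem comb_1_1 {B : Type*} (u1 w1 u2 w2 v1 v2 : List B)
    (hv1 : v1 ≠ []) (hv2 : v2 ≠ []) (hlen : v1.length = v2.length)
    (h : ∀ i : ℕ, u1 ++ wpow v1 i ++ w1 = u2 ++ wpow v2 i ++ w2) :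
    ∃ x : List B, x ≠ [] ∧ ∃ f1 f2 : List B × List B,
      ∀ i : ℕ, 1 ≤ i → ∃ k : ℕ,
        wpow v1 i = capp f1 (wpow x k) ∧ wpow v2 i = capp f2 (wpow x k) :=
  comb_1_1_general u1 w1 u2 w2 v1 v2 hv1 hlen h
end

section
/- Let x, y be nonempty words over B and m, n ∈ ℕ. If x^m and y^n have a common factor of length at least |x| + |y| - gcd(|x|, |y|), then the primitive roots ρ(x) and ρ(y) are conjugate. -/
/-! A common factor `w` of `x^m` and `y^n` has the periods `|x|` and `|y|`, hence, by the
periodicity lemma `List.HasPeriod.gcd`, the period `g = gcd(|x|, |y|)`. Its prefixes of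
lengths `|x|` and `|y|` are rotations of `x = ρ(x)^p` and `y = ρ(y)^q`, i.e. powers of
rotations of `ρ(x)` and `ρ(y)`, and both are powers of the prefix of length `g`. So the
rotated roots, which are still primitive, have a common power, and primitive words with a
common power coincide (again by the periodicity lemma). -/

section Words

variable {B : Type*}

theorem wpow_mul (x : List B) (m n : ℕ) : wpow x (m * n) = wpow (wpow x m) n := by
  induction n with
  | zero => rfl
  | succ n ih => rw [Nat.mul_succ, Nat.add_comm, wpow_add, ih]; rfl

theorem wpow_one (x : List B) : wpow x 1 = x := List.append_nil x

theorem length_wpow_pos {x : List B} {n : ℕ} (hx : x ≠ []) (hn : 0 < n) :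
    0 < (wpow x n).length := by
  rw [length_wpow]
  exact Nat.mul_pos hn (List.length_pos_iff.mpr hx)

theorem take_length_wpow {x : List B} {n : ℕ} (hn : 0 < n) : (wpow x n).take x.length = x := by
  obtain ⟨n, rfl⟩ := Nat.exists_eq_add_one_of_ne_zero hn.ne'
  exact List.take_left

theorem getElem_wpow (x : List B) (n i : ℕ) (hi : i < (wpow x n).length) :
    (wpow x n)[i] = x[i % x.length]'(Nat.mod_lt _ (by
      rw [length_wpow] at hi; exact Nat.pos_of_mul_pos_left (i.zero_le.trans_lt hi))) := by
  induction n generalizing i with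
  | zero => simp [wpow] at hi
  | succ n ih =>
    simp only [wpow]
    by_cases hix : i < x.length
    · simp only [List.getElem_append_left hix, Nat.mod_eq_of_lt hix]
    · rw [List.getElem_append_right (by omega), ih]
      simp only [Nat.mod_eq_sub_mod (Nat.le_of_not_lt hix)]

theorem wpow_rotate (x : List B) (n k : ℕ) : (wpow x n).rotate k = wpow (x.rotate k) n := by
  refine List.ext_getElem (by simp [length_wpow]) fun i h₁ h₂ => ?_
  simp only [List.getElem_rotate, getElem_wpow, List.length_rotate, length_wpow]
  congr 1
  rw [Nat.mod_mod_of_dvd _ (Dvd.intro_left n rfl), Nat.mod_add_mod]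

theorem hasPeriod_wpow (x : List B) (n : ℕ) : (wpow x n).HasPeriod x.length := by
  refine List.hasPeriod_iff_getElem?.mpr fun i hi => ?_
  rw [List.getElem?_eq_getElem (by omega), List.getElem?_eq_getElem (by omega), getElem_wpow,
    getElem_wpow]
  simp only [Nat.add_mod_right]

theorem List.HasPeriod.take_eq_wpow {w : List B} {p k : ℕ} (hw : w.HasPeriod p) (hpk : p ∣ k)
    (hk : k ≤ w.length) : w.take k = wpow (w.take p) (k / p) := by
  rcases Nat.eq_zero_or_pos k with rfl | hk0
  · simp [wpow]
  have hlen : (w.take p).length = p := List.length_take_of_le ((Nat.le_of_dvd hk0 hpk).trans hk)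
  refine List.ext_getElem (by simp [length_wpow, hlen, Nat.div_mul_cancel hpk, hk])
    fun i h₁ h₂ => ?_
  have hi : i < w.length := by simp only [List.length_take] at h₁; omega
  have hmod := hw.getElem?_mod p i w hi
  rw [List.getElem?_eq_getElem hi, List.getElem?_eq_getElem ((Nat.mod_le i p).trans_lt hi),
    Option.some_inj] at hmod
  simp only [List.getElem_take, getElem_wpow, hlen, hmod]

theorem exists_rotate_eq_take_of_infix_wpow {w x : List B} {m : ℕ} (h : w <:+: wpow x m)
    (hxw : x.length ≤ w.length) : ∃ k, w.take x.length = x.rotate k := by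
  obtain ⟨k, hk, hw⟩ := List.infix_iff_getElem?.mp h
  refine ⟨k, List.ext_getElem (by simpa using hxw) fun i hi _ => ?_⟩
  have hiw : i < w.length := by simp only [List.length_take] at hi; omega
  have := hw i hiw
  rw [List.getElem?_eq_getElem (by omega), getElem_wpow, Option.some_inj] at this
  simp only [List.getElem_take, List.getElem_rotate, this]

theorem conj_of_isRotated {u v : List B} (h : u ~r v) : Conj u v := by
  obtain ⟨n, rfl⟩ := h
  exact ⟨u.take (n % u.length), u.drop (n % u.length), (List.take_append_drop _ _).symm,
    List.rotate_eq_drop_append_take_mod⟩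

namespace Primitive

variable {u v : List B}

theorem of_isRotated (hu : Primitive u) (h : u ~r v) : Primitive v := by
  obtain ⟨n, hn⟩ := h.symm
  refine ⟨fun hv => hu.1 (by rw [← hn, hv, List.rotate_nil]), fun s j hj hs => ?_⟩
  exact hu.2 (s.rotate n) j hj (by rw [← hn, hs, wpow_rotate])

theorem eq_of_eq_wpow (hu : Primitive u) {k : ℕ} (h : u = wpow v k) : u = v := by
  have hk : 1 ≤ k := Nat.one_le_iff_ne_zero.mpr fun hk => hu.1 (by rw [h, hk]; rfl)
  rw [h, hu.2 v k hk h, wpow_one]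

theorem eq_of_wpow_eq (hu : Primitive u) (hv : Primitive v) {i j : ℕ} (hi : 0 < i) (hj : 0 < j)
    (h : wpow u i = wpow v j) : u = v := by
  have hu0 : 0 < u.length := List.length_pos_iff.mpr hu.1
  have hv0 : 0 < v.length := List.length_pos_iff.mpr hv.1
  -- `u^(2i)` rather than `u^i`: it is long enough for the periodicity lemma.
  obtain ⟨w, hwu⟩ : ∃ w, w = wpow u (i + i) := ⟨_, rfl⟩
  have hwv : w = wpow v (j + j) := by rw [hwu, wpow_add, h, wpow_add]
  have hlen : u.length + v.length ≤ w.length := by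
    have := congrArg List.length h
    rw [length_wpow, length_wpow] at this
    rw [hwu, length_wpow]
    nlinarith
  have hg : w.HasPeriod (u.length.gcd v.length) :=
    (hwu ▸ hasPeriod_wpow u _).gcd (hwv ▸ hasPeriod_wpow v _) (by omega)
  have hu' : u = w.take (u.length.gcd v.length) := hu.eq_of_eq_wpow <| by
    rw [← hg.take_eq_wpow (Nat.gcd_dvd_left _ _) (by omega), hwu, take_length_wpow (by omega)]
  have hv' : v = w.take (u.length.gcd v.length) := hv.eq_of_eq_wpow <| by
    rw [← hg.take_eq_wpow (Nat.gcd_dvd_right _ _) (by omega), hwv, take_length_wpow (by omega)]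
  exact hu'.trans hv'.symm

end Primitive

end Words

theorem fine_wilf_general {B : Type*} (x y : List B)
    (m n : ℕ)
    (h : ∃ w : List B, w <:+: wpow x m ∧ w <:+: wpow y n ∧
      x.length + y.length - Nat.gcd x.length y.length ≤ w.length)
    (rx ry : List B) (hrx : Primitive rx) (hry : Primitive ry)
    (hxr : ∃ p : ℕ, 1 ≤ p ∧ x = wpow rx p)
    (hyr : ∃ q : ℕ, 1 ≤ q ∧ y = wpow ry q) :
    Conj rx ry := by
  obtain ⟨w, hwx, hwy, hlen⟩ := h
  obtain ⟨p, hp, hx⟩ := hxr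
  obtain ⟨q, hq, hy⟩ := hyr
  have hx0 : 0 < x.length := hx ▸ length_wpow_pos hrx.1 hp
  have hy0 : 0 < y.length := hy ▸ length_wpow_pos hry.1 hq
  set g := x.length.gcd y.length
  have hg0 : 0 < g := Nat.gcd_pos_of_pos_left _ hx0
  have hgx : g ≤ x.length := Nat.gcd_le_left _ hx0
  have hgy : g ≤ y.length := Nat.gcd_le_right _ hy0
  have hg : w.HasPeriod g :=
    ((hasPeriod_wpow x m).infix hwx).gcd ((hasPeriod_wpow y n).infix hwy) hlen
  obtain ⟨k, hk⟩ := exists_rotate_eq_take_of_infix_wpow hwx (by omega)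
  obtain ⟨l, hl⟩ := exists_rotate_eq_take_of_infix_wpow hwy (by omega)
  have hxz : wpow (rx.rotate k) p = wpow (w.take g) (x.length / g) := by
    rw [← wpow_rotate, ← hx, ← hk, hg.take_eq_wpow (Nat.gcd_dvd_left _ _) (by omega)]
  have hyz : wpow (ry.rotate l) q = wpow (w.take g) (y.length / g) := by
    rw [← wpow_rotate, ← hy, ← hl, hg.take_eq_wpow (Nat.gcd_dvd_right _ _) (by omega)]
  have hkl : rx.rotate k = ry.rotate l :=
    (hrx.of_isRotated (List.IsRotated.forall rx k).symm).eq_of_wpow_eq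
      (hry.of_isRotated (List.IsRotated.forall ry l).symm)
      (Nat.mul_pos hp (Nat.div_pos hgy hg0)) (Nat.mul_pos hq (Nat.div_pos hgx hg0))
      (by rw [wpow_mul, wpow_mul, hxz, hyz, ← wpow_mul, ← wpow_mul, Nat.mul_comm])
  exact conj_of_isRotated
    ((List.IsRotated.forall rx k).symm.trans (hkl ▸ List.IsRotated.forall ry l))

/-- Fine and Wilf. -/
theorem fine_wilf {B : Type*} (x y : List B) (hx : x ≠ []) (hy : y ≠ [])
    (m n : ℕ)
    (h : ∃ w : List B, w <:+: wpow x m ∧ w <:+: wpow y n ∧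
      x.length + y.length - Nat.gcd x.length y.length ≤ w.length)
    (rx ry : List B) (hrx : Primitive rx) (hry : Primitive ry)
    (hxr : ∃ p : ℕ, 1 ≤ p ∧ x = wpow rx p)
    (hyr : ∃ q : ℕ, 1 ≤ q ∧ y = wpow ry q) :
    Conj rx ry :=
  fine_wilf_general x y m n h rx ry hrx hry hxr hyr
end
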